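/- Let {a_k} be a decreasing sequence of real numbers and {b_k} a sequence of positive reals such that a_k ≤ a_{k-1}(1 - b_k · a_{k-1}) for k = 1, ..., K. Then a_K ≤ 1 / (∑_{k=1}^K b_k). -/

import Mathlib

/-!
In terms of `c_k = 1 / a_k` the recursion says `c_{k-1} + b_k ≤ c_k` as long as `a_k > 0`, so
`c_K ≥ c_0 + ∑ b_k > ∑ b_k`. The recursion also forces `a` to decrease, so `a_K > 0` makes every
`a_k` positive; and if `a_K ≤ 0` there is nothing to prove.
-/

open Finset

lemma le_of_le_mul_one_sub {x y c : ℝ} (hc : 0 ≤ c) (h : x ≤ y * (1 - c * y)) : x ≤ y := by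
  nlinarith [mul_nonneg hc (sq_nonneg y)]

lemma inv_add_le_inv_of_le_mul_one_sub {x y c : ℝ} (hx : 0 < x) (hc : 0 ≤ c)
    (h : x ≤ y * (1 - c * y)) : y⁻¹ + c ≤ x⁻¹ := by
  have hy : 0 < y := hx.trans_le (le_of_le_mul_one_sub hc h)
  have hxy : x * (1 + c * y) ≤ y :=
    calc x * (1 + c * y) ≤ y * (1 - c * y) * (1 + c * y) := by gcongr
      _ = y - c ^ 2 * y ^ 3 := by ring
      _ ≤ y := sub_le_self _ (by positivity)
  rw [← sub_nonneg]
  have hdiff : x⁻¹ - (y⁻¹ + c) = (y - x * (1 + c * y)) / (x * y) := by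
    field_simp
  rw [hdiff]
  exact div_nonneg (by linarith) (by positivity)

section Recursion

variable {a b : ℕ → ℝ} {K : ℕ} (hb : ∀ k, 0 ≤ b k)
  (hrec : ∀ k, 1 ≤ k → k ≤ K → a k ≤ a (k - 1) * (1 - b k * a (k - 1)))
include hb hrec

lemma antitoneOn_Iic_of_le_mul_one_sub : AntitoneOn a (Set.Iic K) :=
  antitoneOn_of_succ_le Set.ordConnected_Iic fun k _ _ hk =>
    le_of_le_mul_one_sub (hb (k + 1)) (hrec (k + 1) (by omega) hk)

lemma inv_add_sum_Icc_le_inv_of_le_mul_one_sub (haK : 0 < a K) {n : ℕ} (hn : n ≤ K) :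
    (a 0)⁻¹ + ∑ k ∈ Icc 1 n, b k ≤ (a n)⁻¹ := by
  induction n with
  | zero => simp
  | succ n ih =>
    have han : 0 < a (n + 1) :=
      haK.trans_le (antitoneOn_Iic_of_le_mul_one_sub hb hrec hn Set.self_mem_Iic hn)
    have hstep : (a n)⁻¹ + b (n + 1) ≤ (a (n + 1))⁻¹ :=
      inv_add_le_inv_of_le_mul_one_sub han (hb (n + 1)) (hrec (n + 1) (by omega) hn)
    rw [sum_Icc_succ_top (by omega), ← add_assoc]
    linarith [ih (by omega)]

end Recursion

theorem recursive_inequality_general (a b : ℕ → ℝ) (K : ℕ) (hK : 1 ≤ K)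
    (hb : ∀ k, 0 < b k)
    (hrec : ∀ k, 1 ≤ k → k ≤ K → a k ≤ a (k - 1) * (1 - b k * a (k - 1))) :
    a K ≤ 1 / ∑ k ∈ Finset.Icc 1 K, b k := by
  have hS : 0 < ∑ k ∈ Icc 1 K, b k := sum_pos (fun k _ => hb k) ⟨1, mem_Icc.2 ⟨le_rfl, hK⟩⟩
  rcases le_or_gt (a K) 0 with haK | haK
  · exact haK.trans (by positivity)
  have hb' : ∀ k, 0 ≤ b k := fun k => (hb k).le
  have ha0 : 0 < a 0 :=
    haK.trans_le (antitoneOn_Iic_of_le_mul_one_sub hb' hrec K.zero_le Set.self_mem_Iic K.zero_le)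
  have hsum := inv_add_sum_Icc_le_inv_of_le_mul_one_sub hb' hrec haK le_rfl
  rw [one_div, le_inv_comm₀ haK hS]
  linarith [inv_pos.2 ha0]

/-- Recursive inequality (Lemma on recursions): if `a` is decreasing along `1..K`,
`b k > 0`, and `a k ≤ a (k-1) * (1 - b k * a (k-1))` for `k = 1, ..., K`, then
`a K ≤ 1 / ∑_{k=1}^K b k`. -/
theorem recursive_inequality (a b : ℕ → ℝ) (K : ℕ) (hK : 1 ≤ K)
    (hb : ∀ k, 0 < b k)
    (hdec : ∀ k, 1 ≤ k → k ≤ K → a k ≤ a (k - 1))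
    (hrec : ∀ k, 1 ≤ k → k ≤ K → a k ≤ a (k - 1) * (1 - b k * a (k - 1))) :
    a K ≤ 1 / ∑ k ∈ Finset.Icc 1 K, b k :=
  recursive_inequality_general a b K hK hb hrec
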